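/- arXiv:1908.05446 — 2 statements merged into one kernel-verified Lean document; each statement's English description precedes it below -/
import Mathlib

section
/- Let M be a commutative additive monoid which is reduced and atomic with finitely many atoms, let G be an additive commutative group which is a free ℤ-module of finite rank, and let ι : M →+ G be an additive monoid homomorphism whose range generates G as a group (AddSubgroup.closure (Set.range ι) = ⊤). If the number of atoms of M equals the rank of G (Nat.card (Atom M) = finrank ℤ G), then M is free on its set of atoms: the canonical additive map (Atom M →₀ ℕ) →+ M, sending c to ∑_{a} c(a) • a, is bijective. -/
/-- A commutative additive monoid is *reduced* if `a + b = 0` implies `a = 0` and `b = 0`. -/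
def MonoidReduced (M : Type*) [AddCommMonoid M] : Prop :=
  ∀ a b : M, a + b = 0 → a = 0 ∧ b = 0

/-- The set of *atoms* of a commutative additive monoid: nonzero elements `x` such that
`x = y + z` implies `y = 0` or `z = 0`. -/
def Atom (M : Type*) [AddCommMonoid M] : Set M :=
  {x | x ≠ 0 ∧ ∀ y z : M, x = y + z → y = 0 ∨ z = 0}

/-- A commutative additive monoid is *atomic* if every element is the sum of a finite
multiset of atoms. -/
def MonoidAtomic (M : Type*) [AddCommMonoid M] : Prop :=
  ∀ x : M, ∃ s : Multiset M, (∀ a ∈ s, a ∈ Atom M) ∧ s.sum = x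

/-- The canonical additive map `(A →₀ ℕ) →+ M`, sending a finitely supported function `c`
to `∑ a, c a • a`. -/
noncomputable def freeOnMap (M : Type*) [AddCommMonoid M] (A : Set M) : (A →₀ ℕ) →+ M :=
  Finsupp.liftAddHom fun a => multiplesHom M (a : M)

/-- `M` is *free on `A`* if the canonical map `(A →₀ ℕ) →+ M` is bijective. -/
def IsFreeOn (M : Type*) [AddCommMonoid M] (A : Set M) : Prop :=
  Function.Bijective (freeOnMap M A)

/-!
The images of the atoms under `ι` span `G`, since the atoms generate `M` and `ι M` generates `G`.
Over `ℤ` (a ring with the Orzech property) a spanning family with `finrank ℤ G` members is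
linearly independent. The canonical map `(Atom M →₀ ℕ) → M` followed by `ι` is the restriction
of the resulting injective map `(Atom M →₀ ℤ) → G`, so it is injective; it is surjective because
`M` is atomic.
-/

open Finsupp Function

section

variable {M : Type*} [AddCommMonoid M]

@[simp]
lemma freeOnMap_single (A : Set M) (a : A) (n : ℕ) : freeOnMap M A (single a n) = n • (a : M) := by
  simp [freeOnMap]

lemma closure_atom_eq_top_of_atomic (h : MonoidAtomic M) : AddSubmonoid.closure (Atom M) = ⊤ := by
  refine eq_top_iff.2 fun x _ => ?_
  obtain ⟨s, hs, rfl⟩ := h x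
  exact AddSubmonoid.multiset_sum_mem _ _ fun a ha => AddSubmonoid.subset_closure (hs a ha)

lemma freeOnMap_surjective_of_closure_eq_top {A : Set M} (h : AddSubmonoid.closure A = ⊤) :
    Surjective (freeOnMap M A) := by
  rw [← AddMonoidHom.mrange_eq_top, eq_top_iff, ← h, AddSubmonoid.closure_le]
  intro a ha
  exact ⟨single ⟨a, ha⟩ 1, by simp⟩

variable {G : Type*} [AddCommGroup G]

lemma map_freeOnMap (ι : M →+ G) (A : Set M) (c : A →₀ ℕ) :
    ι (freeOnMap M A c) =
      linearCombination ℤ (fun a : A => ι a) (c.mapRange Nat.cast Nat.cast_zero) := by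
  rw [freeOnMap, liftAddHom_apply, map_finsuppSum, linearCombination_apply,
    sum_mapRange_index (by simp)]
  simp [natCast_zsmul]

lemma freeOnMap_injective_of_linearIndependent (ι : M →+ G) {A : Set M}
    (h : LinearIndependent ℤ (fun a : A => ι a)) : Injective (freeOnMap M A) := by
  intro c c' hcc
  have : linearCombination ℤ (fun a : A => ι a) (c.mapRange Nat.cast Nat.cast_zero) =
      linearCombination ℤ (fun a : A => ι a) (c'.mapRange Nat.cast Nat.cast_zero) := by
    rw [← map_freeOnMap, ← map_freeOnMap, hcc]
  exact mapRange_injective _ _ Nat.cast_injective (h this)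

lemma span_range_eq_top_of_closure_eq_top (ι : M →+ G) {A : Set M}
    (hA : AddSubmonoid.closure A = ⊤) (hgen : AddSubgroup.closure (Set.range ι) = ⊤) :
    Submodule.span ℤ (Set.range fun a : A => ι a) = ⊤ := by
  have hrange : Set.range ι ⊆ Submodule.span ℤ (Set.range fun a : A => ι a) := by
    rintro _ ⟨x, rfl⟩
    have hx : ι x ∈ (AddSubmonoid.closure A).map ι := ⟨x, by simp [hA], rfl⟩
    rw [AddMonoidHom.map_mclosure] at hx
    refine AddSubmonoid.closure_le.2 ?_ hx
    rintro _ ⟨a, ha, rfl⟩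
    exact Submodule.subset_span ⟨⟨a, ha⟩, rfl⟩
  rw [eq_top_iff, ← Submodule.toAddSubgroup_le, Submodule.top_toAddSubgroup, ← hgen]
  exact AddSubgroup.closure_le _ |>.2 hrange

end

theorem free_of_card_atoms_eq_finrank_general (M : Type*) [AddCommMonoid M]
    (G : Type*) [AddCommGroup G] (ι : M →+ G)
    (hatomic : MonoidAtomic M) (hfin : (Atom M).Finite)
    (hgen : AddSubgroup.closure (Set.range ι) = ⊤)
    (hcard : Nat.card (Atom M) = Module.finrank ℤ G) :
    IsFreeOn M (Atom M) := by
  have := hfin.fintype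
  have hclosure := closure_atom_eq_top_of_atomic hatomic
  have hspan := span_range_eq_top_of_closure_eq_top ι hclosure hgen
  rw [Nat.card_eq_fintype_card] at hcard
  exact ⟨freeOnMap_injective_of_linearIndependent ι
      (linearIndependent_of_top_le_span_of_card_eq_finrank hspan.ge hcard),
    freeOnMap_surjective_of_closure_eq_top hclosure⟩

/-- Let `M` be a reduced atomic commutative monoid with finitely many atoms and `ι : M →+ G`
a homomorphism to a free abelian group of finite rank whose range generates `G`. If the number
of atoms of `M` equals the rank of `G`, then `M` is free on its set of atoms. -/
theorem free_of_card_atoms_eq_finrank (M : Type*) [AddCommMonoid M]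
    (G : Type*) [AddCommGroup G] [Module.Free ℤ G] [Module.Finite ℤ G] (ι : M →+ G)
    (hred : MonoidReduced M) (hatomic : MonoidAtomic M) (hfin : (Atom M).Finite)
    (hgen : AddSubgroup.closure (Set.range ι) = ⊤)
    (hcard : Nat.card (Atom M) = Module.finrank ℤ G) :
    IsFreeOn M (Atom M) :=
  free_of_card_atoms_eq_finrank_general M G ι hatomic hfin hgen hcard
end

section
/- Let M be a commutative additive monoid and A ⊆ M a subset such that M is free on A, i.e. the canonical additive map (A →₀ ℕ) →+ M, sending a finitely supported function c to ∑_{a ∈ A} c(a) • a, is bijective. Then A equals the set of atoms of M. -/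
/-!
An isomorphism of monoids preserves atoms, and the atoms of `A →₀ ℕ` are the indicator
functions `single a 1`; the isomorphism `freeOnMap` sends these to the elements of `A`.
-/

namespace AddEquiv

variable {M N : Type*} [AddCommMonoid M] [AddCommMonoid N]

theorem map_mem_atom {x : M} (e : M ≃+ N) (hx : x ∈ Atom M) : e x ∈ Atom N := by
  refine ⟨(map_ne_zero_iff e).2 hx.1, fun y z hyz => ?_⟩
  have hsplit : x = e.symm y + e.symm z := by rw [← map_add, ← hyz, symm_apply_apply]
  simpa only [EmbeddingLike.map_eq_zero_iff] using hx.2 _ _ hsplit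

theorem image_atom (e : M ≃+ N) : e '' Atom M = Atom N :=
  Set.Subset.antisymm (Set.image_subset_iff.2 fun _ => e.map_mem_atom)
    fun y hy => ⟨e.symm y, e.symm.map_mem_atom hy, e.apply_symm_apply y⟩

end AddEquiv

namespace Finsupp

variable {ι : Type*}

theorem single_one_mem_atom (i : ι) : single i 1 ∈ Atom (ι →₀ ℕ) := by
  refine ⟨single_ne_zero.2 one_ne_zero, fun y z hyz => ?_⟩
  have hdeg : degree y + degree z = 1 := by rw [← map_add, ← hyz, degree_single]
  rw [← degree_eq_zero_iff y, ← degree_eq_zero_iff z]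
  omega

theorem eq_single_one_of_mem_atom {x : ι →₀ ℕ} (hx : x ∈ Atom (ι →₀ ℕ)) :
    ∃ i, single i 1 = x := by
  obtain ⟨i, hi⟩ := support_nonempty_iff.2 hx.1
  have hle : single i 1 ≤ x := single_le_iff.2 (Nat.one_le_iff_ne_zero.2 (mem_support_iff.1 hi))
  refine ⟨i, ?_⟩
  rcases hx.2 _ (x - single i 1) (add_tsub_cancel_of_le hle).symm with h | h
  · exact absurd h (single_ne_zero.2 one_ne_zero)
  · exact hle.antisymm (tsub_eq_zero_iff_le.1 h)

theorem atom_eq_range_single_one : Atom (ι →₀ ℕ) = Set.range fun i => single i 1 :=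
  Set.ext fun _ => ⟨eq_single_one_of_mem_atom, fun ⟨i, hi⟩ => hi ▸ single_one_mem_atom i⟩

end Finsupp

theorem freeOnMap_single_one {M : Type*} [AddCommMonoid M] {A : Set M} (a : A) :
    freeOnMap M A (Finsupp.single a 1) = a := by
  simp [freeOnMap]

/-- If a commutative additive monoid `M` is free on a subset `A`, then `A` is exactly the
set of atoms of `M`. -/
theorem basis_eq_atoms_of_free (M : Type*) [AddCommMonoid M] (A : Set M)
    (hfree : IsFreeOn M A) : A = Atom M := by
  let e : (A →₀ ℕ) ≃+ M := AddEquiv.ofBijective (freeOnMap M A) hfree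
  calc A = Set.range fun a : A => e (Finsupp.single a 1) := by
        change A = Set.range fun a : A => freeOnMap M A (Finsupp.single a 1)
        simp only [freeOnMap_single_one, Subtype.range_coe]
    _ = e '' Atom (A →₀ ℕ) := by
        rw [Finsupp.atom_eq_range_single_one, ← Set.range_comp]
        rfl
    _ = Atom M := e.image_atom
end
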